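/- Suppose S = ⋂_{i=1}^m argmin f_i ≠ ∅. Then the set of classical cycles Z equals {(z,…,z) : z ∈ S}, i.e., every cycle is a constant tuple with entries in the common minimizer set. -/

import Mathlib

/-! Let `w` be a common minimizer. Each `P i` is firmly nonexpansive towards its fixed point `w`:
`‖P i x - w‖² ≤ ⟪x - w, P i x - w⟫`. Along a cycle the distances `‖z i - w‖` therefore
never increase, so, going once around, they are all equal; equality in the firm
nonexpansiveness inequality then forces `z (i - 1) = z i`. A constant cycle is a common fixed
point of the `P i`, i.e. a common minimizer. -/

open scoped RealInnerProductSpace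

variable {X : Type*} [NormedAddCommGroup X] [InnerProductSpace ℝ X] [CompleteSpace X]
variable {m : ℕ} [NeZero m]

/-- The convex subdifferential. -/
def SubdiffAt (f : X → EReal) (x : X) : Set X :=
  {u | ∀ y, f x + ((⟪u, y - x⟫ : ℝ) : EReal) ≤ f y}

/-- A proper function: never `⊥` and not identically `⊤`. -/
def ProperE (f : X → EReal) : Prop := (∀ x, f x ≠ ⊥) ∧ ∃ x, f x ≠ ⊤

/-- Convexity for extended-real-valued functions. -/
def EConvex (f : X → EReal) : Prop :=
  ∀ x y : X, ∀ a b : ℝ, 0 ≤ a → 0 ≤ b → a + b = 1 →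
    f (a • x + b • y) ≤ (a : EReal) * f x + (b : EReal) * f y

/-- Membership in `Γ₀(X)`. -/
def Gamma0 (f : X → EReal) : Prop := ProperE f ∧ LowerSemicontinuous f ∧ EConvex f

/-- `P` is the proximal mapping `(Id + ∂f)⁻¹` of `f`: `p = P x ⟺ x − p ∈ ∂f(p)`. -/
def IsProxOf (P : X → X) (f : X → EReal) : Prop :=
  ∀ x p : X, p = P x ↔ x - p ∈ SubdiffAt f p

/-- The cyclic composition `P_i ∘ ⋯ ∘ P_1 ∘ P_m ∘ ⋯ ∘ P_{i+1}` (indices mod `m`),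
applying first `P_{i+1}` and ending with `P_i`. -/
def cyc (P : Fin m → X → X) (i : Fin m) : X → X :=
  fun x => (List.range m).foldl (fun y k => P (i + 1 + Fin.ofNat m k) y) x

/-- The fixed point set `F_i` of the cyclic composition ending at index `i`. -/
def FixSet (P : Fin m → X → X) (i : Fin m) : Set X := {x | cyc P i x = x}

/-- The set of minimizers of `f`. -/
def argminSet (f : X → EReal) : Set X := {x | ∀ y, f x ≤ f y}

/-- The set of classical cycles. -/
def cycleSet (P : Fin m → X → X) : Set (Fin m → X) :=
  {z | ∀ i, z i = P i (z (i - 1))}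

open Set

section

variable {E : Type*} [NormedAddCommGroup E] [InnerProductSpace ℝ E]

lemma zero_mem_subdiffAt_iff {f : E → EReal} {x : E} :
    (0 : E) ∈ SubdiffAt f x ↔ x ∈ argminSet f := by
  simp [SubdiffAt, argminSet]

lemma ProperE.ne_top_of_mem_subdiffAt {f : E → EReal} (hf : ProperE f) {p u : E}
    (hu : u ∈ SubdiffAt f p) : f p ≠ ⊤ := by
  intro htop
  obtain ⟨y, hy⟩ := hf.2
  have := hu y
  rw [htop, EReal.top_add_of_ne_bot (EReal.coe_ne_bot _)] at this
  exact hy (top_le_iff.mp this)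

lemma ProperE.inner_sub_nonneg_of_mem_subdiffAt {f : E → EReal} (hf : ProperE f) {p q u v : E}
    (hu : u ∈ SubdiffAt f p) (hv : v ∈ SubdiffAt f q) : 0 ≤ ⟪u - v, p - q⟫ := by
  have hup := hu q
  have hvq := hv p
  rw [← EReal.coe_toReal (hf.ne_top_of_mem_subdiffAt hu) (hf.1 p),
    ← EReal.coe_toReal (hf.ne_top_of_mem_subdiffAt hv) (hf.1 q), ← EReal.coe_add,
    EReal.coe_le_coe_iff] at hup hvq
  rw [← neg_sub p q, inner_neg_right] at hup
  rw [inner_sub_left]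
  linarith

namespace IsProxOf

variable {P : E → E} {f : E → EReal}

lemma apply_eq_self_iff (hP : IsProxOf P f) {x : E} : P x = x ↔ x ∈ argminSet f := by
  rw [eq_comm, hP, sub_self, zero_mem_subdiffAt_iff]

lemma norm_sub_sq_le_inner (hP : IsProxOf P f) (hf : ProperE f) {w : E}
    (hw : w ∈ argminSet f) (x : E) : ‖P x - w‖ ^ 2 ≤ ⟪x - w, P x - w⟫ := by
  have hPx : x - P x ∈ SubdiffAt f (P x) := (hP x (P x)).mp rfl
  have hmono := hf.inner_sub_nonneg_of_mem_subdiffAt hPx (zero_mem_subdiffAt_iff.mpr hw)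
  have hsplit : x - w = (x - P x) + (P x - w) := by abel
  rw [sub_zero] at hmono
  rw [hsplit, inner_add_left, real_inner_self_eq_norm_sq]
  linarith

end IsProxOf

lemma norm_le_of_norm_sq_le_inner {a b : E} (h : ‖b‖ ^ 2 ≤ ⟪a, b⟫) : ‖b‖ ≤ ‖a‖ := by
  nlinarith [real_inner_le_norm a b, norm_nonneg a, norm_nonneg b]

lemma eq_of_norm_sq_le_inner_of_norm_le {a b : E} (h : ‖b‖ ^ 2 ≤ ⟪a, b⟫) (hab : ‖a‖ ≤ ‖b‖) :
    a = b := by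
  have hsq : ‖a - b‖ ^ 2 ≤ 0 := by
    rw [norm_sub_sq_real]
    nlinarith [norm_nonneg a]
  exact sub_eq_zero.mp (norm_eq_zero.mp (pow_eq_zero_iff two_ne_zero |>.mp
    (le_antisymm hsq (sq_nonneg _))))

lemma eq_of_le_apply_sub {G M : Type*} [AddGroup G] [Fintype G] [AddCommMonoid M]
    [PartialOrder M] [IsOrderedCancelAddMonoid M] (g : G → M) (c : G)
    (h : ∀ i, g i ≤ g (i - c)) (i : G) : g (i - c) = g i := by
  have hsum : ∑ j, g j = ∑ j, g (j - c) := (Equiv.sum_comp (Equiv.subRight c) g).symm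
  exact ((Finset.sum_eq_sum_iff_of_le fun j _ => h j).mp hsum i (Finset.mem_univ i)).symm

open Fin.CommRing in
lemma Fin.apply_eq_apply_zero_of_apply_sub_one {α : Type*} {n : ℕ} [NeZero n] (z : Fin n → α)
    (h : ∀ i, z (i - 1) = z i) (i : Fin n) : z i = z 0 := by
  have hnat : ∀ k : ℕ, z (k : Fin n) = z 0 := by
    intro k
    induction k with
    | zero => simp
    | succ k ih => rw [← h, Nat.cast_succ, add_sub_cancel_right, ih]
  simpa using hnat i

end

/-- If `S = ⋂ argmin f_i ≠ ∅`, then the set of classical cycles equals the set of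
constant tuples with entries in `S`. -/
theorem stmt_17 (f : Fin m → X → EReal) (hf : ∀ i, Gamma0 (f i))
    (P : Fin m → X → X) (hP : ∀ i, IsProxOf (P i) (f i))
    (hS : (⋂ i, argminSet (f i)).Nonempty) :
    cycleSet P = (fun w : X => (fun _ : Fin m => w)) '' (⋂ i, argminSet (f i)) := by
  obtain ⟨w, hw⟩ := hS
  ext z
  constructor
  · intro hz
    have hfirm : ∀ i, ‖z i - w‖ ^ 2 ≤ ⟪z (i - 1) - w, z i - w⟫ := fun i => by
      rw [hz i]; exact (hP i).norm_sub_sq_le_inner (hf i).1 (mem_iInter.mp hw i) _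
    have hnorm := eq_of_le_apply_sub (fun i => ‖z i - w‖) 1
      fun i => norm_le_of_norm_sq_le_inner (hfirm i)
    have hshift : ∀ i, z (i - 1) = z i := fun i =>
      sub_left_inj.mp (eq_of_norm_sq_le_inner_of_norm_le (hfirm i) (hnorm i).le)
    have hconst := Fin.apply_eq_apply_zero_of_apply_sub_one z hshift
    refine ⟨z 0, mem_iInter.mpr fun i => ?_, funext fun i => (hconst i).symm⟩
    rw [← (hP i).apply_eq_self_iff]
    simpa only [hconst] using (hz i).symm
  · rintro ⟨v, hv, rfl⟩ i
    exact ((hP i).apply_eq_self_iff.mpr (mem_iInter.mp hv i)).symm
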